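/- Every element of the discriminant group of the lattice E8(-2) is represented by half an element v ∈ E8(-2) with v·v ≥ -16. -/
import Mathlib


/-- The E8 bilinear form on `ℤ⁸`, given in the root basis by the Cartan
matrix of `E₈` (which is the Gram matrix of the E8 lattice). -/
def E8form (x y : Fin 8 → ℤ) : ℤ :=
  ∑ i, ∑ j, x i * CartanMatrix.E₈ i j * y j

lemma E8form_zero_one (v : Fin 8 → Fin 2) :
    E8form (fun i => (v i : ℤ)) (fun i => (v i : ℤ)) ≤ 8 := by
  revert v
  set_option maxRecDepth 100000 in decide

lemma E8form_le_of_zero_one (w : Fin 8 → ℤ) (h : ∀ i, w i = 0 ∨ w i = 1) :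
    E8form w w ≤ 8 := by
  have hw : w = fun i => (((if w i = 0 then 0 else 1 : Fin 2)) : ℤ) := by
    funext i
    rcases h i with h0 | h0 <;> simp [h0]
  rw [hw]
  exact E8form_zero_one _

/-- Every element of the discriminant group of `E8(-2)` is represented by half
an element of square `≥ -16`; equivalently, every element of `E8` is congruent
modulo `2·E8` to an element `w` with `w·w ≤ 8`. -/
theorem stmt_5 (x : Fin 8 → ℤ) :
    ∃ w y : Fin 8 → ℤ, x = w + 2 • y ∧ E8form w w ≤ 8 := by
  refine ⟨fun i => x i % 2, fun i => x i / 2, ?_, ?_⟩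
  · funext i
    simp only [Pi.add_apply, Pi.smul_apply, two_nsmul]
    omega
  · exact E8form_le_of_zero_one _ fun i => Int.emod_two_eq_zero_or_one (x i)
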